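/- arXiv:1408.2043 — 3 statements merged into one kernel-verified Lean document; each statement's English description precedes it below -/
import Mathlib

section
/- Let k ∈ (0,1). For every integer n ≥ 1, the function u ↦ E(u,k)·cos u − sin u·√(1−k²sin²u) (which is the function f₁(p) = cn p·E(p) − sn p·dn p of the paper written in the Legendre variable u = am(p,k)) has exactly one zero in the open interval ((2n−1)π/2, (2n+1)π/2), and this zero lies in the subinterval (nπ, nπ + π/2). (Proposition on the roots p₁ⁿ(k) of f₁, expressed in Legendre form: p₁ⁿ(k) ∈ (2nK(k), (2n+1)K(k)).) -/
open Real

/-- Incomplete elliptic integral of the second kind in Legendre form: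
`E(u,k) = ∫₀ᵘ √(1 − k² sin² φ) dφ`. -/
noncomputable def EllE (u k : ℝ) : ℝ :=
  ∫ φ in (0:ℝ)..u, Real.sqrt (1 - k ^ 2 * Real.sin φ ^ 2)

/-!
Where `cos u ≠ 0`, the quotient `f₁ / cos = E − tan · dn` has derivative
`−(1 − k²) sin² u / (dn · cos² u)`: the `E` terms cancel, so it is strictly decreasing on
`(nπ − π/2, nπ]` and on `[nπ, nπ + π/2)`. Its value at `nπ` is `E(nπ, k) > 0`, which excludes
zeros left of `nπ`; on the right, `f₁(nπ) = ±E(nπ, k)` and `f₁(nπ + π/2) = ∓√(1 − k²)` have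
opposite signs, so the intermediate value theorem gives the zero and monotonicity its uniqueness.
-/

open Set

lemma one_sub_sq_mul_sin_sq_pos {k : ℝ} (hk : k ^ 2 < 1) (u : ℝ) : 0 < 1 - k ^ 2 * sin u ^ 2 := by
  nlinarith [sin_sq_le_one u, sq_nonneg (sin u)]

lemma hasDerivAt_EllE (k u : ℝ) : HasDerivAt (fun u => EllE u k) √(1 - k ^ 2 * sin u ^ 2) u :=
  ((by fun_prop : Continuous fun φ => √(1 - k ^ 2 * sin φ ^ 2)).integral_hasStrictDerivAt
    0 u).hasDerivAt

lemma EllE_pos {k u : ℝ} (hk : k ^ 2 < 1) (hu : 0 < u) : 0 < EllE u k :=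
  intervalIntegral.intervalIntegral_pos_of_pos (Continuous.intervalIntegrable (by fun_prop) _ _)
    (fun φ => sqrt_pos.2 (one_sub_sq_mul_sin_sq_pos hk φ)) hu

noncomputable def f1 (k u : ℝ) : ℝ := EllE u k * cos u - sin u * √(1 - k ^ 2 * sin u ^ 2)

lemma hasDerivAt_f1 {k : ℝ} (hk : k ^ 2 < 1) (u : ℝ) :
    HasDerivAt (f1 k)
      (-sin u * (EllE u k - k ^ 2 * sin u * cos u / √(1 - k ^ 2 * sin u ^ 2))) u := by
  have hΔ := one_sub_sq_mul_sin_sq_pos hk u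
  have hΔ' : HasDerivAt (fun u => √(1 - k ^ 2 * sin u ^ 2))
      (-(k ^ 2 * (2 * sin u ^ 1 * cos u)) / (2 * √(1 - k ^ 2 * sin u ^ 2))) u :=
    ((((hasDerivAt_sin u).pow 2).const_mul (k ^ 2)).const_sub 1).sqrt hΔ.ne'
  refine (((hasDerivAt_EllE k u).mul (hasDerivAt_cos u)).sub
    ((hasDerivAt_sin u).mul hΔ')).congr_deriv ?_
  field_simp
  ring

lemma hasDerivAt_f1_div_cos {k u : ℝ} (hk : k ^ 2 < 1) (hcos : cos u ≠ 0) :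
    HasDerivAt (fun u => f1 k u / cos u)
      (-((1 - k ^ 2) * sin u ^ 2) / (√(1 - k ^ 2 * sin u ^ 2) * cos u ^ 2)) u := by
  have hΔ := one_sub_sq_mul_sin_sq_pos hk u
  have hΔ0 : √(1 - k ^ 2 * sin u ^ 2) ≠ 0 := (sqrt_pos.2 hΔ).ne'
  refine ((hasDerivAt_f1 hk u).div (hasDerivAt_cos u) hcos).congr_deriv ?_
  have hsq := sq_sqrt hΔ.le
  have hpyth := sin_sq_add_cos_sq u
  unfold f1
  set Δ := √(1 - k ^ 2 * sin u ^ 2)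
  field_simp
  linear_combination (-sin u ^ 2) * hsq + (sin u ^ 2 * k ^ 2) * hpyth

lemma strictAntiOn_f1_div_cos {k : ℝ} (hk : k ^ 2 < 1) {D : Set ℝ} (hD : Convex ℝ D)
    (hcos : ∀ u ∈ D, cos u ≠ 0) (hsin : ∀ u ∈ interior D, sin u ≠ 0) :
    StrictAntiOn (fun u => f1 k u / cos u) D := by
  refine strictAntiOn_of_deriv_neg hD
    (fun u hu => (hasDerivAt_f1_div_cos hk (hcos u hu)).continuousAt.continuousWithinAt)
    fun u hu => ?_
  rw [(hasDerivAt_f1_div_cos hk (hcos u (interior_subset hu))).deriv]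
  have hsin2 : 0 < sin u ^ 2 := sq_pos_of_ne_zero (hsin u hu)
  have hΔ := sqrt_pos.2 (one_sub_sq_mul_sin_sq_pos hk u)
  have hcos2 : 0 < cos u ^ 2 := sq_pos_of_ne_zero (hcos u (interior_subset hu))
  exact div_neg_of_neg_of_pos (neg_neg_of_pos (mul_pos (by linarith) hsin2)) (mul_pos hΔ hcos2)

lemma cos_ne_zero_of_mem_Ioo_nat_mul_pi {n : ℕ} {u : ℝ}
    (hu : u ∈ Ioo (n * π - π / 2) (n * π + π / 2)) : cos u ≠ 0 := by
  have hpos : 0 < cos (u - n * π) := cos_pos_of_mem_Ioo ⟨by linarith [hu.1], by linarith [hu.2]⟩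
  rw [cos_sub_nat_mul_pi] at hpos
  exact right_ne_zero_of_mul hpos.ne'

lemma sin_ne_zero_of_mem_Ioo_nat_mul_pi {n : ℕ} {u : ℝ} (hu : u ∈ Ioo (n * π - π) (n * π + π))
    (hne : u ≠ n * π) : sin u ≠ 0 := by
  intro h
  have hsub := sin_sub_nat_mul_pi u n
  rw [h, mul_zero, sin_eq_zero_iff_of_lt_of_lt (by linarith [hu.1]) (by linarith [hu.2])] at hsub
  exact hne (by linarith)

lemma mem_Ioo_of_f1_eq_zero {k u : ℝ} (hk : k ^ 2 < 1) {n : ℕ} (hn : 0 < n)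
    (hu : u ∈ Ioo (n * π - π / 2) (n * π + π / 2)) (hfu : f1 k u = 0) :
    u ∈ Ioo (n * π) (n * π + π / 2) := by
  refine ⟨lt_of_not_ge fun hle => ?_, hu.2⟩
  have hanti : StrictAntiOn (fun u => f1 k u / cos u) (Ioc (n * π - π / 2) (n * π)) :=
    strictAntiOn_f1_div_cos hk (convex_Ioc _ _)
      (fun v hv => cos_ne_zero_of_mem_Ioo_nat_mul_pi ⟨hv.1, by linarith [hv.2, pi_pos]⟩)
      (fun v hv => by
        rw [interior_Ioc] at hv
        exact sin_ne_zero_of_mem_Ioo_nat_mul_pi ⟨by linarith [hv.1, pi_pos],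
          by linarith [hv.2, pi_pos]⟩ hv.2.ne)
  have hcenter : f1 k (n * π) / cos (n * π) = EllE (n * π) k := by
    simp [f1, cos_nat_mul_pi, sin_nat_mul_pi]
  have hmono := hanti.antitoneOn ⟨hu.1, hle⟩ ⟨by linarith [pi_pos], le_rfl⟩ hle
  rw [hcenter, hfu, zero_div] at hmono
  linarith [EllE_pos hk (by positivity : (0 : ℝ) < n * π)]

lemma eq_of_f1_eq_zero {k u v : ℝ} (hk : k ^ 2 < 1) {n : ℕ}
    (hu : u ∈ Ico (n * π) (n * π + π / 2)) (hv : v ∈ Ico (n * π) (n * π + π / 2))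
    (hfu : f1 k u = 0) (hfv : f1 k v = 0) : u = v := by
  have hanti : StrictAntiOn (fun u => f1 k u / cos u) (Ico (n * π) (n * π + π / 2)) :=
    strictAntiOn_f1_div_cos hk (convex_Ico _ _)
      (fun w hw => cos_ne_zero_of_mem_Ioo_nat_mul_pi ⟨by linarith [hw.1, pi_pos], hw.2⟩)
      (fun w hw => by
        rw [interior_Ico] at hw
        exact sin_ne_zero_of_mem_Ioo_nat_mul_pi ⟨by linarith [hw.1, pi_pos],
          by linarith [hw.2, pi_pos]⟩ hw.1.ne')
  exact hanti.injOn hu hv (by simp only [hfu, hfv, zero_div])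

lemma exists_f1_eq_zero {k : ℝ} (hk : k ^ 2 < 1) {n : ℕ} (hn : 0 < n) :
    ∃ u ∈ Ioo (n * π) (n * π + π / 2), f1 k u = 0 := by
  have hcont : ContinuousOn (f1 k) (Icc (n * π) (n * π + π / 2)) :=
    fun u _ => (hasDerivAt_f1 hk u).continuousAt.continuousWithinAt
  have hab : n * π ≤ n * π + π / 2 := by linarith [pi_pos]
  have hE := EllE_pos hk (by positivity : (0 : ℝ) < n * π)
  have hΔ : 0 < √(1 - k ^ 2) := sqrt_pos.2 (by linarith)
  have hleft : f1 k (n * π) = (-1) ^ n * EllE (n * π) k := by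
    simp only [f1, cos_nat_mul_pi, sin_nat_mul_pi]
    ring
  have hright : f1 k (n * π + π / 2) = -((-1) ^ n * √(1 - k ^ 2)) := by
    simp [f1, add_comm (n * π), cos_add_nat_mul_pi, sin_add_nat_mul_pi, ← pow_mul,
      pow_mul']
  rcases neg_one_pow_eq_or ℝ n with hsign | hsign <;> rw [hsign] at hleft hright
  · exact intermediate_value_Ioo' hab hcont ⟨by linarith, by linarith⟩
  · exact intermediate_value_Ioo hab hcont ⟨by linarith, by linarith⟩

/-- For `k ∈ (0,1)` and every integer `n ≥ 1`, the function
`u ↦ E(u,k)·cos u − sin u·√(1 − k² sin² u)` (the function `f₁` of the paper in the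
Legendre variable) has exactly one zero in `((2n−1)π/2, (2n+1)π/2)`, and this zero
lies in `(nπ, nπ + π/2)`. -/
theorem f1_unique_root (k : ℝ) (hk : k ∈ Set.Ioo (0:ℝ) 1) (n : ℕ) (hn : 1 ≤ n) :
    (∃! u : ℝ, u ∈ Set.Ioo ((2 * (n:ℝ) - 1) * π / 2) ((2 * (n:ℝ) + 1) * π / 2) ∧
      EllE u k * Real.cos u - Real.sin u * Real.sqrt (1 - k ^ 2 * Real.sin u ^ 2) = 0) ∧
    (∀ u : ℝ, u ∈ Set.Ioo ((2 * (n:ℝ) - 1) * π / 2) ((2 * (n:ℝ) + 1) * π / 2) →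
      EllE u k * Real.cos u - Real.sin u * Real.sqrt (1 - k ^ 2 * Real.sin u ^ 2) = 0 →
      u ∈ Set.Ioo ((n:ℝ) * π) ((n:ℝ) * π + π / 2)) := by
  have hk2 : k ^ 2 < 1 := by nlinarith [hk.1, hk.2]
  have hI : Ioo ((2 * (n:ℝ) - 1) * π / 2) ((2 * (n:ℝ) + 1) * π / 2) =
      Ioo (n * π - π / 2) (n * π + π / 2) := by
    congr 1 <;> ring
  rw [hI]
  have hloc : ∀ u ∈ Ioo (n * π - π / 2) (n * π + π / 2), f1 k u = 0 →
      u ∈ Ioo (n * π) (n * π + π / 2) :=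
    fun u hu => mem_Ioo_of_f1_eq_zero hk2 hn hu
  obtain ⟨u₀, hu₀, hfu₀⟩ := exists_f1_eq_zero hk2 hn
  refine ⟨⟨u₀, ⟨⟨by linarith [hu₀.1, pi_pos], hu₀.2⟩, hfu₀⟩, fun v ⟨hv, hfv⟩ => ?_⟩, hloc⟩
  exact eq_of_f1_eq_zero hk2 (Ioo_subset_Ico_self (hloc v hv hfv)) (Ioo_subset_Ico_self hu₀)
    hfv hfu₀
end

section
/- There exists k̂ ∈ (0,1) such that for all k ∈ (0,k̂), all u ∈ ℝ with 0 < F(u,k) < π, and all v ∈ ℝ, one has J₁(u,v,k) > 0. (Positivity of the Jacobian numerator J₁ for small modulus k and p = F(u,k) ∈ (0,π).) -/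
open Real

/-- Incomplete elliptic integral of the first kind in Legendre form:
`F(u,k) = ∫₀ᵘ dφ/√(1 − k² sin² φ)`. -/
noncomputable def EllF (u k : ℝ) : ℝ :=
  ∫ φ in (0:ℝ)..u, 1 / Real.sqrt (1 - k ^ 2 * Real.sin φ ^ 2)

/-- The numerator `J₁(u,v,k) = −4k(α₁ + α₂ + α₃)` of the Jacobian of the exponential
mapping of the sub-Riemannian problem on SH(2), in Legendre variables `u = am(p,k)`,
`v = am(τ,k)`. -/
noncomputable def J₁ (u v k : ℝ) : ℝ :=
  -4 * k *
    ((Real.sin u * Real.cos u * Real.sqrt (1 - k ^ 2 * Real.sin u ^ 2) *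
        (2 * EllE u k - (1 - k ^ 2) * EllF u k)) +
     (-(1 - k ^ 2 * Real.sin u ^ 2) * Real.sin u ^ 2 -
        k ^ 2 * Real.sin u ^ 2 * Real.cos v ^ 2) +
     (EllE u k * (Real.sin u ^ 2 - Real.sin v ^ 2) *
        (EllE u k - (1 - k ^ 2) * EllF u k)))

/-!
For `k ≤ 1/7` the bracket `α₁ + α₂ + α₃` is negative. Write `Δ = √(1 - k² sin² u)` and
`D = E - (1 - k²) F`; all estimates on `E`, `F`, `D` come from comparing derivatives at `u = 0`:
`E' = Δ`, `F' = 1 / Δ`, `D' = k² cos² u / Δ`. For `u ≤ π/2` the leading term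
`sin u (u cos u - sin u) ≤ -u⁴/12` beats the `O(k² u⁴)` remainder, once `sin u cos u Δ D` has
been absorbed by the convex combination of `k² sin² u` and `E D` with weights `cos² v`, `sin² v`.
For `u ≥ π/2` every term is nonpositive except `-sin² u (1 - k² sin² u - E D)`, which is
negative.
-/

open Set

lemma le_of_hasDerivAt_nonneg {f f' : ℝ → ℝ} {a b : ℝ} (hab : a ≤ b)
    (hf : ∀ x, HasDerivAt f (f' x) x) (hf' : ∀ x ∈ Ioo a b, 0 ≤ f' x) : f a ≤ f b :=
  monotoneOn_of_hasDerivWithinAt_nonneg (convex_Icc a b)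
    (fun x _ => (hf x).continuousAt.continuousWithinAt) (fun x _ => (hf x).hasDerivWithinAt)
    (by simpa using hf') (left_mem_Icc.2 hab) (right_mem_Icc.2 hab) hab

section Trigonometric

variable {x : ℝ}

lemma div_two_le_sin (hx : 0 ≤ x) (hx' : x ≤ π / 2) : x / 2 ≤ sin x := by
  refine le_trans ?_ (mul_le_sin hx hx')
  rw [div_mul_eq_mul_div, div_le_div_iff₀ two_pos pi_pos]
  nlinarith [pi_le_four]

lemma cube_div_six_le_sin_sub_mul_cos (hx : 0 ≤ x) (hx' : x ≤ π / 2) :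
    x ^ 3 / 6 ≤ sin x - x * cos x := by
  have hf : ∀ y, HasDerivAt (fun y => sin y - y * cos y - y ^ 3 / 6)
      (y * (sin y - y / 2)) y := by
    intro y
    refine (((hasDerivAt_sin y).sub ((hasDerivAt_id y).mul (hasDerivAt_cos y))).sub
      ((hasDerivAt_pow 3 y).div_const 6)).congr_deriv ?_
    simp only [id, Nat.cast_ofNat]
    ring
  have := le_of_hasDerivAt_nonneg hx hf fun y ⟨hy0, hy⟩ =>
    mul_nonneg hy0.le (sub_nonneg.2 (div_two_le_sin hy0.le (by linarith)))
  simp only [sin_zero, cos_zero] at this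
  linarith

end Trigonometric

noncomputable def ellDelta (k φ : ℝ) : ℝ := √(1 - k ^ 2 * sin φ ^ 2)

section EllipticIntegrals

variable {k u : ℝ}

lemma continuous_ellDelta (k : ℝ) : Continuous (ellDelta k) := by
  unfold ellDelta
  fun_prop

lemma ellDelta_le_one (k φ : ℝ) : ellDelta k φ ≤ 1 :=
  sqrt_le_one.2 (by nlinarith [sq_nonneg (k * sin φ)])

lemma ellDelta_sq (hk : k ^ 2 ≤ 1) (φ : ℝ) : ellDelta k φ ^ 2 = 1 - k ^ 2 * sin φ ^ 2 :=
  sq_sqrt (by nlinarith [sin_sq_le_one φ])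

lemma one_sub_sq_le_ellDelta (hk : k ^ 2 ≤ 1) (φ : ℝ) : 1 - k ^ 2 ≤ ellDelta k φ := by
  have h0 : 0 ≤ ellDelta k φ := sqrt_nonneg _
  nlinarith [ellDelta_sq hk φ, mul_le_mul_of_nonneg_left (ellDelta_le_one k φ) h0,
    sin_sq_le_one φ]

lemma ellDelta_pos (hk : k ^ 2 < 1) (φ : ℝ) : 0 < ellDelta k φ := by
  linarith [one_sub_sq_le_ellDelta hk.le φ]

lemma hasDerivAt_ellDelta (hk : k ^ 2 < 1) (φ : ℝ) :
    HasDerivAt (ellDelta k) (-(k ^ 2 * sin φ * cos φ) / ellDelta k φ) φ := by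
  have h := (((hasDerivAt_sin φ).fun_pow 2).const_mul (k ^ 2)).const_sub 1 |>.sqrt
    (by rw [← ellDelta_sq hk.le]; exact (pow_pos (ellDelta_pos hk φ) 2).ne')
  refine h.congr_deriv ?_
  rw [ellDelta]
  field_simp
  ring

lemma hasDerivAt_ellE (k u : ℝ) : HasDerivAt (fun u => EllE u k) (ellDelta k u) u :=
  ((continuous_ellDelta k).integral_hasStrictDerivAt 0 u).hasDerivAt

lemma hasDerivAt_ellF (hk : k ^ 2 < 1) (u : ℝ) :
    HasDerivAt (fun u => EllF u k) (1 / ellDelta k u) u :=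
  ((continuous_const.div (continuous_ellDelta k) fun φ => (ellDelta_pos hk φ).ne')
    |>.integral_hasStrictDerivAt 0 u).hasDerivAt

lemma hasDerivAt_ellE_sub_ellF (hk : k ^ 2 < 1) (u : ℝ) :
    HasDerivAt (fun u => EllE u k - (1 - k ^ 2) * EllF u k)
      (k ^ 2 * cos u ^ 2 / ellDelta k u) u := by
  refine ((hasDerivAt_ellE k u).sub ((hasDerivAt_ellF hk u).const_mul _)).congr_deriv ?_
  have := ellDelta_pos hk u
  field_simp
  linear_combination ellDelta_sq hk.le u - k ^ 2 * sin_sq_add_cos_sq u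

@[simp] lemma ellE_zero (k : ℝ) : EllE 0 k = 0 := by simp [EllE]

@[simp] lemma ellF_zero (k : ℝ) : EllF 0 k = 0 := by simp [EllF]

lemma ellE_nonneg (hu : 0 ≤ u) : 0 ≤ EllE u k := by
  simpa using monotone_of_hasDerivAt_nonneg (hasDerivAt_ellE k) (fun φ => sqrt_nonneg _) hu

lemma ellE_le (hu : 0 ≤ u) : EllE u k ≤ u := by
  have := monotone_of_hasDerivAt_nonneg (fun φ => (hasDerivAt_id φ).sub (hasDerivAt_ellE k φ))
    (fun φ => sub_nonneg.2 (ellDelta_le_one k φ)) hu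
  simpa using this

lemma strictMono_ellF (hk : k ^ 2 < 1) : StrictMono fun u => EllF u k :=
  strictMono_of_hasDerivAt_pos (hasDerivAt_ellF hk) fun φ => one_div_pos.2 (ellDelta_pos hk φ)

lemma le_ellF (hk : k ^ 2 < 1) (hu : 0 ≤ u) : u ≤ EllF u k := by
  have := monotone_of_hasDerivAt_nonneg (fun φ => (hasDerivAt_ellF hk φ).sub (hasDerivAt_id φ))
    (fun φ => sub_nonneg.2 ((one_le_div (ellDelta_pos hk φ)).2 (ellDelta_le_one k φ))) hu
  simpa using this

lemma ellE_sub_ellF_nonneg (hk : k ^ 2 < 1) (hu : 0 ≤ u) :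
    0 ≤ EllE u k - (1 - k ^ 2) * EllF u k := by
  simpa using monotone_of_hasDerivAt_nonneg (hasDerivAt_ellE_sub_ellF hk)
    (fun φ => div_nonneg (by positivity) (ellDelta_pos hk φ).le) hu

lemma ellE_sub_ellF_le (hk : k ^ 2 < 1) (hu : 0 ≤ u) :
    (1 - k ^ 2) * (EllE u k - (1 - k ^ 2) * EllF u k) ≤ k ^ 2 * u := by
  have := monotone_of_hasDerivAt_nonneg
    (fun φ => ((hasDerivAt_id φ).const_mul (k ^ 2)).sub
      ((hasDerivAt_ellE_sub_ellF hk φ).const_mul (1 - k ^ 2))) ?_ hu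
  · simpa using this
  intro φ
  have hΔ := ellDelta_pos hk φ
  have : (1 - k ^ 2) * cos φ ^ 2 ≤ ellDelta k φ :=
    (mul_le_of_le_one_right (by linarith) (cos_sq_le_one φ)).trans
      (one_sub_sq_le_ellDelta hk.le φ)
  simp only [mul_one, Pi.zero_apply, sub_nonneg]
  rw [mul_div_assoc', div_le_iff₀ hΔ]
  nlinarith [sq_nonneg k]

lemma sin_mul_cos_mul_ellDelta_le_ellE (hk : k ^ 2 < 1) (hu : 0 ≤ u) :
    sin u * cos u * ellDelta k u ≤ EllE u k := by
  have hf : ∀ φ, HasDerivAt (fun φ => EllE φ k - sin φ * cos φ * ellDelta k φ)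
      (2 * sin φ ^ 2 * ellDelta k φ + k ^ 2 * sin φ ^ 2 * cos φ ^ 2 / ellDelta k φ) φ := by
    intro φ
    refine ((hasDerivAt_ellE k φ).sub (((hasDerivAt_sin φ).mul (hasDerivAt_cos φ)).mul
      (hasDerivAt_ellDelta hk φ))).congr_deriv ?_
    have := ellDelta_pos hk φ
    simp only [Pi.mul_apply]
    field_simp
    linear_combination (-ellDelta k φ ^ 2) * sin_sq_add_cos_sq φ
  have := monotone_of_hasDerivAt_nonneg hf
    (fun φ => add_nonneg (by have := ellDelta_pos hk φ; positivity)
      (div_nonneg (by positivity) (ellDelta_pos hk φ).le)) hu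
  simpa using this

lemma cos_mul_ellE_sub_ellF_le (hk : k ^ 2 < 1) (hu : 0 ≤ u) (hu' : u ≤ π / 2) :
    cos u * (EllE u k - (1 - k ^ 2) * EllF u k) ≤ k ^ 2 * sin u := by
  have hf : ∀ φ, HasDerivAt
      (fun φ => k ^ 2 * sin φ - cos φ * (EllE φ k - (1 - k ^ 2) * EllF φ k))
      (k ^ 2 * cos φ * (1 - cos φ ^ 2 / ellDelta k φ) +
        sin φ * (EllE φ k - (1 - k ^ 2) * EllF φ k)) φ := by
    intro φ
    refine (((hasDerivAt_sin φ).const_mul _).sub ((hasDerivAt_cos φ).mul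
      (hasDerivAt_ellE_sub_ellF hk φ))).congr_deriv ?_
    ring
  have := le_of_hasDerivAt_nonneg hu hf fun φ ⟨hφ0, hφu⟩ => by
    have hΔ := ellDelta_pos hk φ
    -- `cos² φ = 1 - sin² φ ≤ Δ(φ)² ≤ Δ(φ)`
    have hcos : cos φ ^ 2 ≤ ellDelta k φ := by
      nlinarith [ellDelta_sq hk.le φ, ellDelta_le_one k φ, sin_sq_add_cos_sq φ,
        mul_nonneg (sq_nonneg k) (sq_nonneg (sin φ)), sin_sq_le_one φ]
    have : 0 ≤ cos φ := cos_nonneg_of_mem_Icc ⟨by linarith [pi_pos], by linarith⟩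
    have : 0 ≤ sin φ := sin_nonneg_of_nonneg_of_le_pi hφ0.le (by linarith [pi_pos])
    have : 0 ≤ 1 - cos φ ^ 2 / ellDelta k φ := sub_nonneg.2 ((div_le_one hΔ).2 hcos)
    have := ellE_sub_ellF_nonneg hk hφ0.le
    positivity
  simpa using this

end EllipticIntegrals

section Bracket

/- `s, c, q, E, F, sv, cv` stand for `sin u, cos u, Δ(u), E(u,k), F(u,k), sin² v, cos² v`,
so that the goals below are the bracket of `J₁`. -/
variable {k u s c q E F sv cv : ℝ}

lemma bracket_neg_of_cos_nonneg (hk : k ^ 2 ≤ 1 / 49) (hu : 0 < u) (hs : u / 2 ≤ s)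
    (hsu : s ≤ u) (hsc : u ^ 3 / 6 ≤ s - u * c) (hc : 0 ≤ c) (hq0 : 0 ≤ q) (hq1 : q ≤ 1)
    (hEu : E ≤ u) (hscq : s * c * q ≤ E) (hD0 : 0 ≤ E - (1 - k ^ 2) * F)
    (hDu : (1 - k ^ 2) * (E - (1 - k ^ 2) * F) ≤ k ^ 2 * u)
    (hcD : c * (E - (1 - k ^ 2) * F) ≤ k ^ 2 * s)
    (hv : sv + cv = 1) (hsv : 0 ≤ sv) (hcv : 0 ≤ cv) :
    s * c * q * (2 * E - (1 - k ^ 2) * F) + (-(1 - k ^ 2 * s ^ 2) * s ^ 2 - k ^ 2 * s ^ 2 * cv)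
      + E * (s ^ 2 - sv) * (E - (1 - k ^ 2) * F) < 0 := by
  set D := E - (1 - k ^ 2) * F
  have hs0 : 0 < s := by linarith
  have hscqD : s * c * q * D ≤ k ^ 2 * s ^ 2 * cv + E * D * sv := by
    have h1 : s * c * q * D ≤ k ^ 2 * s ^ 2 := by
      have := mul_le_mul_of_nonneg_left hcD hs0.le
      nlinarith [mul_nonneg (mul_nonneg hs0.le (mul_nonneg hc hD0)) (sub_nonneg.2 hq1)]
    have h2 : s * c * q * D ≤ E * D := mul_le_mul_of_nonneg_right hscq hD0
    calc s * c * q * D = s * c * q * D * cv + s * c * q * D * sv := by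
          linear_combination (-(s * c * q * D)) * hv
      _ ≤ k ^ 2 * s ^ 2 * cv + E * D * sv :=
          add_le_add (mul_le_mul_of_nonneg_right h1 hcv) (mul_le_mul_of_nonneg_right h2 hsv)
  have hscqE : s * c * q * E ≤ s * c * u := by
    have hE0 : 0 ≤ E := (by positivity : 0 ≤ s * c * q).trans hscq
    calc s * c * q * E ≤ s * c * 1 * u := by gcongr
      _ = s * c * u := by ring
  have hmain : s * c * u - s ^ 2 ≤ -(u ^ 4 / 12) := by
    nlinarith [mul_le_mul hs hsc (by positivity) hs0.le]
  have hD : D ≤ 2 * k ^ 2 * u := by nlinarith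
  have hED : E * D ≤ 2 * k ^ 2 * u ^ 2 := by nlinarith [mul_le_mul hEu hD hD0 hu.le]
  have hs4 : s ^ 4 ≤ u ^ 4 := pow_le_pow_left₀ hs0.le hsu 4
  have hs2 : s ^ 2 ≤ u ^ 2 := pow_le_pow_left₀ hs0.le hsu 2
  have hu4 : 0 < u ^ 4 := by positivity
  nlinarith [mul_le_mul_of_nonneg_left hs4 (sq_nonneg k),
    mul_le_mul hED hs2 (sq_nonneg s) (by positivity)]

lemma bracket_neg_of_cos_nonpos (hk : k ^ 2 ≤ 1 / 49) (hu : 0 < u) (huπ : u < π)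
    (hs0 : 0 < s) (hs1 : s ≤ 1) (hc : c ≤ 0) (hq0 : 0 ≤ q) (hE0 : 0 ≤ E) (hEu : E ≤ u)
    (hD0 : 0 ≤ E - (1 - k ^ 2) * F) (hDu : (1 - k ^ 2) * (E - (1 - k ^ 2) * F) ≤ k ^ 2 * u)
    (hsv : 0 ≤ sv) (hcv : 0 ≤ cv) :
    s * c * q * (2 * E - (1 - k ^ 2) * F) + (-(1 - k ^ 2 * s ^ 2) * s ^ 2 - k ^ 2 * s ^ 2 * cv)
      + E * (s ^ 2 - sv) * (E - (1 - k ^ 2) * F) < 0 := by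
  set D := E - (1 - k ^ 2) * F
  have h1 : s * c * q * (E + D) ≤ 0 :=
    mul_nonpos_of_nonpos_of_nonneg (mul_nonpos_of_nonpos_of_nonneg
      (mul_nonpos_of_nonneg_of_nonpos hs0.le hc) hq0) (by positivity)
  have hD : D ≤ 2 * k ^ 2 * u := by nlinarith
  have hED : E * D ≤ 20 * k ^ 2 := by
    nlinarith [mul_le_mul hEu hD hD0 hu.le, pi_lt_d2]
  have : k ^ 2 * s ^ 2 + E * D < 1 := by nlinarith
  nlinarith [mul_nonneg (mul_nonneg hE0 hD0) hsv,
    mul_nonneg (sq_nonneg k) (mul_nonneg (sq_nonneg s) hcv),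
    mul_lt_mul_of_pos_left this (by positivity : 0 < s ^ 2)]

end Bracket

/-- There exists `k̂ ∈ (0,1)` such that for all `k ∈ (0,k̂)`, all `u` with
`0 < F(u,k) < π`, and all `v`, the Jacobian numerator `J₁(u,v,k)` is positive. -/
theorem J1_positive_small_k :
    ∃ khat : ℝ, khat ∈ Set.Ioo (0:ℝ) 1 ∧
      ∀ k : ℝ, k ∈ Set.Ioo (0:ℝ) khat →
        ∀ u : ℝ, 0 < EllF u k → EllF u k < π →
          ∀ v : ℝ, 0 < J₁ u v k := by
  refine ⟨1 / 7, ⟨by norm_num, by norm_num⟩, fun k ⟨hk0, hk7⟩ u hF0 hFπ v => ?_⟩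
  have hk : k ^ 2 ≤ 1 / 49 := by nlinarith
  have hk1 : k ^ 2 < 1 := by linarith
  have hu0 : 0 < u := (strictMono_ellF hk1).lt_iff_lt.1 (by simpa using hF0)
  have huπ : u < π := (le_ellF hk1 hu0.le).trans_lt hFπ
  refine mul_pos_of_neg_of_neg (by linarith) ?_
  rcases le_total u (π / 2) with hu | hu
  · exact bracket_neg_of_cos_nonneg hk hu0 (div_two_le_sin hu0.le hu) (sin_le hu0.le)
      (cube_div_six_le_sin_sub_mul_cos hu0.le hu) (cos_nonneg_of_mem_Icc ⟨by linarith, hu⟩)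
      (sqrt_nonneg _) (ellDelta_le_one k u) (ellE_le hu0.le)
      (sin_mul_cos_mul_ellDelta_le_ellE hk1 hu0.le) (ellE_sub_ellF_nonneg hk1 hu0.le)
      (ellE_sub_ellF_le hk1 hu0.le) (cos_mul_ellE_sub_ellF_le hk1 hu0.le hu)
      (sin_sq_add_cos_sq v) (sq_nonneg _) (sq_nonneg _)
  · exact bracket_neg_of_cos_nonpos hk hu0 huπ (sin_pos_of_pos_of_lt_pi hu0 huπ) (sin_le_one u)
      (cos_nonpos_of_pi_div_two_le_of_le hu (by linarith)) (sqrt_nonneg _) (ellE_nonneg hu0.le)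
      (ellE_le hu0.le) (ellE_sub_ellF_nonneg hk1 hu0.le) (ellE_sub_ellF_le hk1 hu0.le)
      (sq_nonneg _) (sq_nonneg _)
end

section
/- Let s₁, s₂ ∈ {−1,1}, φ ∈ ℝ, t ∈ ℝ, and set φ_t = φ + t, w = cosh φ, τ = φ + t/2, p = t/2, Δ = cosh²τ + sinh²p. Define x_t = (s₁/2)[(1/w)(φ_t−φ) + w(tanh φ_t − tanh φ)], y_t = (s₂/2)[(1/w)(φ_t−φ) − w(tanh φ_t − tanh φ)], z_t = −s₁s₂·ln(w/cosh φ_t). Then R₁ := y_t·cosh(z_t/2) − x_t·sinh(z_t/2) = s₂·(2p − sinh 2p)/(2√Δ) and R₂ := x_t·cosh(z_t/2) − y_t·sinh(z_t/2) = s₁·(2p + sinh 2p)/(2√Δ). (Identities (3.17)–(3.18): the functions R₁, R₂ along extremal trajectories with λ ∈ C₃.) -/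
/-!
With `a = cosh φ`, `b = cosh φ_t` and `ε = -s₁s₂ = ±1`, the angle is `z_t / 2 = ε · ½ log (a / b)`,
so `cosh (z_t / 2) = (a + b) / (2√(ab))` and `sinh (z_t / 2) = ε (a - b) / (2√(ab))`.
Moreover `Δ = cosh (τ - p) cosh (τ + p) = ab` and `w (tanh φ_t - tanh φ) = sinh t / b`, after
which both identities are a polynomial identity in `t`, `sinh t`, `a`, `b` using `s₁² = s₂² = 1`.
-/

open Real

namespace Real

theorem tanh_sub_tanh (x y : ℝ) : tanh x - tanh y = sinh (x - y) / (cosh x * cosh y) := by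
  rw [tanh_eq_sinh_div_cosh, tanh_eq_sinh_div_cosh, sinh_sub]
  field_simp [(cosh_pos x).ne', (cosh_pos y).ne']

theorem cosh_sq_add_sinh_sq (x y : ℝ) :
    cosh x ^ 2 + sinh y ^ 2 = cosh (x - y) * cosh (x + y) := by
  rw [cosh_sub, cosh_add]
  linear_combination (-cosh x ^ 2) * cosh_sq_sub_sinh_sq y - sinh y ^ 2 * cosh_sq_sub_sinh_sq x

theorem cosh_log_div_div_two {a b : ℝ} (ha : 0 < a) (hb : 0 < b) :
    cosh (log (a / b) / 2) = (a + b) / (2 * √(a * b)) := by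
  have : 0 < √b := sqrt_pos.2 hb
  rw [← log_sqrt (div_pos ha hb).le, cosh_log (sqrt_pos.2 (div_pos ha hb)), sqrt_div ha.le,
    sqrt_mul ha.le]
  field_simp
  rw [sq_sqrt ha.le, sq_sqrt hb.le]

theorem sinh_log_div_div_two {a b : ℝ} (ha : 0 < a) (hb : 0 < b) :
    sinh (log (a / b) / 2) = (a - b) / (2 * √(a * b)) := by
  have : 0 < √a := sqrt_pos.2 ha
  have : 0 < √b := sqrt_pos.2 hb
  rw [← log_sqrt (div_pos ha hb).le, sinh_log (sqrt_pos.2 (div_pos ha hb)), sqrt_div ha.le,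
    sqrt_mul ha.le]
  field_simp
  rw [sq_sqrt ha.le, sq_sqrt hb.le]

theorem cosh_sign_mul {s : ℝ} (hs : s = -1 ∨ s = 1) (x : ℝ) : cosh (s * x) = cosh x := by
  rcases hs with rfl | rfl <;> simp

theorem sinh_sign_mul {s : ℝ} (hs : s = -1 ∨ s = 1) (x : ℝ) : sinh (s * x) = s * sinh x := by
  rcases hs with rfl | rfl <;> simp

end Real

theorem neg_mul_sign_sign {s₁ s₂ : ℝ} (hs₁ : s₁ = -1 ∨ s₁ = 1) (hs₂ : s₂ = -1 ∨ s₂ = 1) :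
    -(s₁ * s₂) = -1 ∨ -(s₁ * s₂) = 1 := by
  rcases hs₁ with rfl | rfl <;> rcases hs₂ with rfl | rfl <;> norm_num

theorem sq_eq_one_of_sign {s : ℝ} (hs : s = -1 ∨ s = 1) : s ^ 2 = 1 := by
  rcases hs with rfl | rfl <;> norm_num

/-- Identities (3.17)–(3.18): along extremal trajectories with `λ ∈ C₃` of the
sub-Riemannian problem on SH(2),
`R₁ = y_t cosh(z_t/2) − x_t sinh(z_t/2) = s₂ (2p − sinh 2p)/(2√Δ)` and
`R₂ = x_t cosh(z_t/2) − y_t sinh(z_t/2) = s₁ (2p + sinh 2p)/(2√Δ)`. -/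
theorem R1_R2_formulas_C3 (s₁ s₂ : ℝ) (hs₁ : s₁ = -1 ∨ s₁ = 1) (hs₂ : s₂ = -1 ∨ s₂ = 1)
    (φ t : ℝ) :
    let φt : ℝ := φ + t
    let w : ℝ := Real.cosh φ
    let τ : ℝ := φ + t / 2
    let p : ℝ := t / 2
    let Δ : ℝ := Real.cosh τ ^ 2 + Real.sinh p ^ 2
    let x : ℝ := s₁ / 2 * ((1 / w) * (φt - φ) + w * (Real.tanh φt - Real.tanh φ))
    let y : ℝ := s₂ / 2 * ((1 / w) * (φt - φ) - w * (Real.tanh φt - Real.tanh φ))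
    let z : ℝ := -(s₁ * s₂) * Real.log (w / Real.cosh φt)
    (y * Real.cosh (z / 2) - x * Real.sinh (z / 2) =
      s₂ * (2 * p - Real.sinh (2 * p)) / (2 * Real.sqrt Δ)) ∧
    (x * Real.cosh (z / 2) - y * Real.sinh (z / 2) =
      s₁ * (2 * p + Real.sinh (2 * p)) / (2 * Real.sqrt Δ)) := by
  intro φt w τ p Δ x y z
  have ha : 0 < w := cosh_pos φ
  have hb : 0 < cosh φt := cosh_pos φt
  have hΔ : Δ = w * cosh φt := by
    simpa [Δ, τ, p, φt, add_assoc] using cosh_sq_add_sinh_sq τ p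
  have hΔpos : 0 < √Δ := by rw [hΔ]; positivity
  have htanh : w * (tanh φt - tanh φ) = sinh t / cosh φt := by
    rw [tanh_sub_tanh, show φt - φ = t by ring]
    field_simp
    exact mul_comm _ _
  have hz : z / 2 = -(s₁ * s₂) * (log (w / cosh φt) / 2) := by ring
  have hcosh : cosh (z / 2) = (w + cosh φt) / (2 * √Δ) := by
    rw [hz, cosh_sign_mul (neg_mul_sign_sign hs₁ hs₂), cosh_log_div_div_two ha hb, hΔ]
  have hsinh : sinh (z / 2) = -(s₁ * s₂) * ((w - cosh φt) / (2 * √Δ)) := by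
    rw [hz, sinh_sign_mul (neg_mul_sign_sign hs₁ hs₂), sinh_log_div_div_two ha hb, hΔ]
  simp only [x, y, htanh, hcosh, hsinh, show φt - φ = t by ring, show 2 * p = t by ring]
  constructor
  · field_simp
    linear_combination s₂ * (t * cosh φt + w * sinh t) * (w - cosh φt) * sq_eq_one_of_sign hs₁
  · field_simp
    linear_combination s₁ * (t * cosh φt - w * sinh t) * (w - cosh φt) * sq_eq_one_of_sign hs₂
end
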